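/- Discrete energy estimate for Rothe's scheme: if u^i solves (−Δ_Ω u^i, v) + (δ²u^i, v) = (f^i, v) for all test functions v vanishing on ∂Ω, where δu^i = (u^i − u^{i−1})/ℓ and δ²u^i = (δu^i − δu^{i−1})/ℓ, then for 0 < ℓ < 1: (1−ℓ)(‖∇u^i‖²_{L²} + ‖δu^i‖²_{L²}) ≤ ‖∇u^{i−1}‖²_{L²} + ‖δu^{i−1}‖²_{L²} + ℓ‖f^i‖²_{L²}. -/

import Mathlib

/-!
Test the scheme with `v = uⁱ - uⁱ⁻¹ = ℓ δuⁱ`. Green's formula turns the Laplacian term into the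
Dirichlet form `𝓔(uⁱ, uⁱ - uⁱ⁻¹)`, and the identity `2(a - b)a = a² - b² + (a - b)²`, applied to
this form and to `(δuⁱ - δuⁱ⁻¹, δuⁱ)`, bounds twice the left-hand side from below by the increase
of `‖∇u‖² + ‖δu‖²`. Young's inequality `2ℓ(f, δuⁱ) ≤ ℓ‖f‖² + ℓ‖δuⁱ‖²` bounds the right-hand side,
and dropping `ℓ‖∇uⁱ‖² ≥ 0` produces the factor `1 - ℓ`.
-/

open Finset

/-- Graph (Dirichlet) Laplacian. -/
noncomputable def graphLap {V : Type*} [Fintype V] (ω : V → V → ℝ) (μ : V → ℝ)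
    (u : V → ℝ) (x : V) : ℝ :=
  (1 / μ x) * ∑ y, ω x y * (u y - u x)

/-- Gradient form `Γ(u,v)`. -/
noncomputable def graphGamma {V : Type*} [Fintype V] (ω : V → V → ℝ) (μ : V → ℝ)
    (u v : V → ℝ) (x : V) : ℝ :=
  (1 / (2 * μ x)) * ∑ y, ω x y * (u y - u x) * (v y - v x)

/-- The bilinear form behind `‖∇u‖²`: it equals `∑ₓ Γ(u, w)(x) μ(x)` for every `μ` with no zeros. -/
noncomputable def graphEnergy {V : Type*} [Fintype V] (ω : V → V → ℝ) (u w : V → ℝ) : ℝ :=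
  2⁻¹ * ∑ x, ∑ y, ω x y * (u y - u x) * (w y - w x)

theorem sq_sub_sq_le_two_mul_sub_mul (a b : ℝ) : a ^ 2 - b ^ 2 ≤ 2 * ((a - b) * a) := by
  nlinarith [sq_nonneg (a - b)]

section Weighted

variable {ι : Type*} (s : Finset ι) {μ : ι → ℝ}

theorem sum_sq_mul_sub_sum_sq_mul_le (hμ : ∀ x ∈ s, 0 ≤ μ x) (a b : ι → ℝ) :
    ∑ x ∈ s, a x ^ 2 * μ x - ∑ x ∈ s, b x ^ 2 * μ x ≤ 2 * ∑ x ∈ s, (a x - b x) * a x * μ x := by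
  rw [← sum_sub_distrib, mul_sum]
  refine sum_le_sum fun x hx => ?_
  nlinarith [mul_le_mul_of_nonneg_right (sq_sub_sq_le_two_mul_sub_mul (a x) (b x)) (hμ x hx)]

theorem two_mul_sum_mul_mul_le (hμ : ∀ x ∈ s, 0 ≤ μ x) (f g : ι → ℝ) :
    2 * ∑ x ∈ s, f x * g x * μ x ≤ ∑ x ∈ s, f x ^ 2 * μ x + ∑ x ∈ s, g x ^ 2 * μ x := by
  rw [← sum_add_distrib, mul_sum]
  refine sum_le_sum fun x hx => ?_
  nlinarith [mul_nonneg (sq_nonneg (f x - g x)) (hμ x hx)]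

end Weighted

section Graph

variable {V : Type*} [Fintype V] (ω : V → V → ℝ) (μ : V → ℝ)

theorem graphEnergy_self_nonneg (hnonneg : ∀ x y, 0 ≤ ω x y) (u : V → ℝ) :
    0 ≤ graphEnergy ω u u :=
  mul_nonneg (by norm_num) <| sum_nonneg fun x _ => sum_nonneg fun y _ => by
    rw [mul_assoc]; exact mul_nonneg (hnonneg x y) (mul_self_nonneg _)

theorem two_mul_graphEnergy_sub (u w : V → ℝ) :
    2 * graphEnergy ω u (u - w)
      = graphEnergy ω u u - graphEnergy ω w w + graphEnergy ω (u - w) (u - w) := by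
  simp only [graphEnergy, Pi.sub_apply, mul_sum, ← sum_sub_distrib, ← sum_add_distrib]
  refine sum_congr rfl fun x _ => sum_congr rfl fun y _ => by ring

theorem graphEnergy_sub_graphEnergy_le (hnonneg : ∀ x y, 0 ≤ ω x y) (u w : V → ℝ) :
    graphEnergy ω u u - graphEnergy ω w w ≤ 2 * graphEnergy ω u (u - w) := by
  rw [two_mul_graphEnergy_sub]
  linarith [graphEnergy_self_nonneg ω hnonneg (u - w)]

theorem sum_neg_graphLap_mul (hsymm : ∀ x y, ω x y = ω y x) (hμ : ∀ x, μ x ≠ 0)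
    {s : Finset V} (u v : V → ℝ) (hv : ∀ x ∉ s, v x = 0) :
    ∑ x ∈ s, -graphLap ω μ u x * v x * μ x = graphEnergy ω u v := by
  have hswap : ∑ x, ∑ y, ω x y * (u y - u x) * v y = -∑ x, ∑ y, ω x y * (u y - u x) * v x := by
    rw [sum_comm, ← sum_neg_distrib]
    refine sum_congr rfl fun x _ => ?_
    rw [← sum_neg_distrib]
    exact sum_congr rfl fun y _ => by rw [hsymm]; ring
  have hsplit : ∑ x, ∑ y, ω x y * (u y - u x) * (v y - v x)
      = ∑ x, ∑ y, ω x y * (u y - u x) * v y - ∑ x, ∑ y, ω x y * (u y - u x) * v x := by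
    simp only [← sum_sub_distrib, mul_sub]
  rw [graphEnergy, hsplit, hswap, sum_subset (subset_univ s) fun x _ hx => by simp [hv x hx],
    show ∀ S : ℝ, 2⁻¹ * (-S - S) = -S from fun S => by ring, ← sum_neg_distrib]
  refine sum_congr rfl fun x _ => ?_
  rw [graphLap, ← sum_mul]
  field_simp [hμ x]

theorem sum_graphGamma_mul (hμ : ∀ x, μ x ≠ 0) (u w : V → ℝ) :
    ∑ x, graphGamma ω μ u w x * μ x = graphEnergy ω u w := by
  rw [graphEnergy, mul_sum]
  refine sum_congr rfl fun x _ => ?_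
  rw [graphGamma]
  field_simp [hμ x]

theorem graphGamma_eq_zero_of_notMem (hsymm : ∀ x y, ω x y = ω y x) {s t : Finset V}
    (hst : s ⊆ t) (hnb : ∀ x ∈ s, ∀ y, ω x y ≠ 0 → y ∈ t) {u : V → ℝ} (hu : ∀ x ∉ s, u x = 0)
    (w : V → ℝ) {x : V} (hx : x ∉ t) : graphGamma ω μ u w x = 0 := by
  have hux : u x = 0 := hu x fun h => hx (hst h)
  have hterm (y : V) : ω x y * (u y - u x) * (w y - w x) = 0 := by
    by_cases hy : y ∈ s
    · have hω : ω x y = 0 := by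
        by_contra hω
        exact hx (hnb y hy x (by rwa [hsymm]))
      simp [hω]
    · simp [hux, hu y hy]
  simp [graphGamma, hterm]

theorem sum_graphGamma_mul_of_support (hsymm : ∀ x y, ω x y = ω y x) (hμ : ∀ x, μ x ≠ 0)
    {s t : Finset V} (hst : s ⊆ t) (hnb : ∀ x ∈ s, ∀ y, ω x y ≠ 0 → y ∈ t) {u : V → ℝ}
    (hu : ∀ x ∉ s, u x = 0) (w : V → ℝ) :
    ∑ x ∈ t, graphGamma ω μ u w x * μ x = graphEnergy ω u w := by
  rw [← sum_graphGamma_mul ω μ hμ]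
  exact sum_subset (subset_univ t) fun x _ hx => by
    rw [graphGamma_eq_zero_of_notMem ω μ hsymm hst hnb hu w hx, zero_mul]

end Graph

theorem rothe_energy_estimate_general {V : Type*} [Fintype V]
    (ω : V → V → ℝ) (μ : V → ℝ)
    (hsymm : ∀ x y, ω x y = ω y x) (hnonneg : ∀ x y, 0 ≤ ω x y)
    (hμ : ∀ x, 0 < μ x)
    (Ω Ωo : Finset V) (hsub : Ωo ⊆ Ω)
    (hnb : ∀ x ∈ Ωo, ∀ y, ω x y ≠ 0 → y ∈ Ω)
    (ℓ : ℝ) (hℓ0 : 0 < ℓ)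
    (ui uim1 uim2 fi : V → ℝ)
    (hui : ∀ x, x ∉ Ωo → ui x = 0) (huim1 : ∀ x, x ∉ Ωo → uim1 x = 0)
    (heq : ∀ v : V → ℝ, (∀ x, x ∉ Ωo → v x = 0) →
      ∑ x ∈ Ωo, (-(graphLap ω μ ui x)) * v x * μ x
        + ∑ x ∈ Ωo, (((ui x - uim1 x) / ℓ - (uim1 x - uim2 x) / ℓ) / ℓ) * v x * μ x
      = ∑ x ∈ Ωo, fi x * v x * μ x) :
    (1 - ℓ) * (∑ x ∈ Ω, graphGamma ω μ ui ui x * μ x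
        + ∑ x ∈ Ω, ((ui x - uim1 x) / ℓ) ^ 2 * μ x)
      ≤ ∑ x ∈ Ω, graphGamma ω μ uim1 uim1 x * μ x
        + ∑ x ∈ Ω, ((uim1 x - uim2 x) / ℓ) ^ 2 * μ x
        + ℓ * ∑ x ∈ Ω, (fi x) ^ 2 * μ x := by
  have hμ0 : ∀ x, μ x ≠ 0 := fun x => (hμ x).ne'
  have hμΩo : ∀ x ∈ Ωo, 0 ≤ μ x := fun x _ => (hμ x).le
  let δu : V → ℝ := fun x => (ui x - uim1 x) / ℓ
  let δuPrev : V → ℝ := fun x => (uim1 x - uim2 x) / ℓ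
  have hv : ∀ x ∉ Ωo, (ui - uim1) x = 0 := fun x hx => by simp [hui x hx, huim1 x hx]
  have htested : graphEnergy ω ui (ui - uim1) + ∑ x ∈ Ωo, (δu x - δuPrev x) * δu x * μ x
      = ℓ * ∑ x ∈ Ωo, fi x * δu x * μ x := by
    rw [← sum_neg_graphLap_mul ω μ hsymm hμ0 ui _ hv, mul_sum]
    convert heq _ hv using 2
    · exact sum_congr rfl fun x _ => by simp only [δu, δuPrev, Pi.sub_apply]; ring
    · simp only [δu, Pi.sub_apply]; field_simp [hℓ0.ne']
  have hδu : ∑ x ∈ Ωo, δu x ^ 2 * μ x = ∑ x ∈ Ω, δu x ^ 2 * μ x :=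
    sum_subset hsub fun x _ hx => by simp [δu, hui x hx, huim1 x hx]
  have hδuPrev : ∑ x ∈ Ωo, δuPrev x ^ 2 * μ x ≤ ∑ x ∈ Ω, δuPrev x ^ 2 * μ x :=
    sum_le_sum_of_subset_of_nonneg hsub fun x _ _ => by have := hμ x; positivity
  have hf : ∑ x ∈ Ωo, fi x ^ 2 * μ x ≤ ∑ x ∈ Ω, fi x ^ 2 * μ x :=
    sum_le_sum_of_subset_of_nonneg hsub fun x _ _ => by have := hμ x; positivity
  have hgrad := graphEnergy_sub_graphEnergy_le ω hnonneg ui uim1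
  have hkin := hδu ▸ sum_sq_mul_sub_sum_sq_mul_le Ωo hμΩo δu δuPrev
  have hyoung := hδu ▸ two_mul_sum_mul_mul_le Ωo hμΩo fi δu
  rw [sum_graphGamma_mul_of_support ω μ hsymm hμ0 hsub hnb hui,
    sum_graphGamma_mul_of_support ω μ hsymm hμ0 hsub hnb huim1]
  linarith [mul_le_mul_of_nonneg_left hyoung hℓ0.le, mul_le_mul_of_nonneg_left hf hℓ0.le,
    mul_nonneg hℓ0.le (graphEnergy_self_nonneg ω hnonneg ui)]

/-- Discrete energy estimate for Rothe's scheme: if `u^i` solves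
`(−Δ_Ω u^i, v) + (δ²u^i, v) = (f^i, v)` for all test functions `v`, then for `0 < ℓ < 1`
`(1−ℓ)(‖∇u^i‖² + ‖δu^i‖²) ≤ ‖∇u^{i−1}‖² + ‖δu^{i−1}‖² + ℓ‖f^i‖²`. -/
theorem rothe_energy_estimate {V : Type*} [Fintype V]
    (ω : V → V → ℝ) (μ : V → ℝ)
    (hsymm : ∀ x y, ω x y = ω y x) (hnonneg : ∀ x y, 0 ≤ ω x y)
    (hμ : ∀ x, 0 < μ x)
    (Ω Ωo : Finset V) (hsub : Ωo ⊆ Ω) (hΩone : Ωo.Nonempty)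
    (hnb : ∀ x ∈ Ωo, ∀ y, ω x y ≠ 0 → y ∈ Ω)
    (ℓ : ℝ) (hℓ0 : 0 < ℓ) (hℓ1 : ℓ < 1)
    (ui uim1 uim2 fi : V → ℝ)
    (hui : ∀ x, x ∉ Ωo → ui x = 0) (huim1 : ∀ x, x ∉ Ωo → uim1 x = 0)
    (huim2 : ∀ x, x ∉ Ωo → uim2 x = 0) (hfi : ∀ x, x ∉ Ωo → fi x = 0)
    (heq : ∀ v : V → ℝ, (∀ x, x ∉ Ωo → v x = 0) →
      ∑ x ∈ Ωo, (-(graphLap ω μ ui x)) * v x * μ x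
        + ∑ x ∈ Ωo, (((ui x - uim1 x) / ℓ - (uim1 x - uim2 x) / ℓ) / ℓ) * v x * μ x
      = ∑ x ∈ Ωo, fi x * v x * μ x) :
    (1 - ℓ) * (∑ x ∈ Ω, graphGamma ω μ ui ui x * μ x
        + ∑ x ∈ Ω, ((ui x - uim1 x) / ℓ) ^ 2 * μ x)
      ≤ ∑ x ∈ Ω, graphGamma ω μ uim1 uim1 x * μ x
        + ∑ x ∈ Ω, ((uim1 x - uim2 x) / ℓ) ^ 2 * μ x
        + ℓ * ∑ x ∈ Ω, (fi x) ^ 2 * μ x :=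
  rothe_energy_estimate_general ω μ hsymm hnonneg hμ Ω Ωo hsub hnb ℓ hℓ0 ui uim1 uim2 fi hui huim1
    heq
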